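/- arXiv:2207.03057 — 6 statements merged into one kernel-verified Lean document; each statement's English description precedes it below -/
import Mathlib

section
/- Let X be an infinite-dimensional Banach space, e ∈ X with ‖e‖ = 1, φ ∈ X* with ‖φ‖ ≤ 1 and φ(e) = 1 and φ(x) < 1 for all x with ‖x‖ < 1, and α ∈ (0,1). Then the map T: B_X → B_X defined by T(x) = ((1 + φ(x)²)/2)^α · e maps the closed unit ball into itself, is α·2^(1−α)-Lipschitz, and its fixed point set is exactly {e}. -/
open Metric Set

lemma aux_key {α t : ℝ} (hα : α ∈ Set.Ioo (0:ℝ) 1) (ht : |t| ≤ 1) :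
    2⁻¹ ≤ (1 + t ^ 2) / 2 ∧ (1 + t ^ 2) / 2 ≤ 1 ∧ ((1 + t ^ 2) / 2 : ℝ) ^ α ≤ 1 := by
  have h2 : t ^ 2 ≤ 1 := by
    have := abs_le.1 ht; nlinarith [this.1, this.2]
  have hlo : (2 : ℝ)⁻¹ ≤ (1 + t ^ 2) / 2 := by nlinarith [sq_nonneg t]
  have hhi : (1 + t ^ 2) / 2 ≤ 1 := by linarith
  refine ⟨hlo, hhi, ?_⟩
  calc ((1 + t ^ 2) / 2 : ℝ) ^ α ≤ 1 ^ α :=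
        Real.rpow_le_rpow (by positivity) hhi hα.1.le
    _ = 1 := Real.one_rpow α

theorem stmt_7 {X : Type*} [NormedAddCommGroup X] [NormedSpace ℝ X] [CompleteSpace X]
    (hinf : ¬ FiniteDimensional ℝ X)
    (e : X) (he : ‖e‖ = 1) (φ : X →L[ℝ] ℝ) (hφ : ‖φ‖ ≤ 1) (hφe : φ e = 1)
    (hφlt : ∀ x : X, ‖x‖ < 1 → φ x < 1)
    (α : ℝ) (hα : α ∈ Set.Ioo (0 : ℝ) 1)
    (T : X → X) (hTdef : ∀ x, T x = ((1 + (φ x) ^ 2) / 2) ^ α • e) :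
    Set.MapsTo T (Metric.closedBall (0 : X) 1) (Metric.closedBall (0 : X) 1) ∧
      (∀ x ∈ Metric.closedBall (0 : X) 1, ∀ y ∈ Metric.closedBall (0 : X) 1,
        ‖T x - T y‖ ≤ α * (2 : ℝ) ^ (1 - α) * ‖x - y‖) ∧
      {x ∈ Metric.closedBall (0 : X) 1 | T x = x} = {e} := by
  have hφbound : ∀ x : X, x ∈ Metric.closedBall (0 : X) 1 → |φ x| ≤ 1 := by
    intro x hx
    rw [Metric.mem_closedBall, dist_zero_right] at hx
    calc |φ x| = ‖φ x‖ := rfl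
      _ ≤ ‖φ‖ * ‖x‖ := φ.le_opNorm x
      _ ≤ 1 * 1 := by
          exact mul_le_mul hφ hx (norm_nonneg x) (le_trans (norm_nonneg φ) hφ)
      _ = 1 := one_mul 1
  -- the scalar function and its derivative
  set f : ℝ → ℝ := fun t => ((1 + t ^ 2) / 2) ^ α with hf
  set f' : ℝ → ℝ := fun t => t * α * ((1 + t ^ 2) / 2) ^ (α - 1) with hf'
  have hpos : ∀ t : ℝ, (0 : ℝ) < (1 + t ^ 2) / 2 := fun t => by positivity
  have hderiv : ∀ t : ℝ, HasDerivAt f (f' t) t := by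
    intro t
    have hu : HasDerivAt (fun t : ℝ => (1 + t ^ 2) / 2) t t := by
      have : HasDerivAt (fun t : ℝ => 1 + t ^ 2) (2 * t ^ 1) t :=
        (hasDerivAt_pow 2 t).const_add 1
      simpa using this.div_const 2
    have := hu.rpow_const (p := α) (Or.inl (hpos t).ne')
    simpa [hf', mul_comm, mul_assoc, mul_left_comm] using this
  have hbound : ∀ t ∈ Set.Icc (-1 : ℝ) 1, ‖f' t‖ ≤ α * (2 : ℝ) ^ (1 - α) := by
    intro t ht
    have ht' : |t| ≤ 1 := abs_le.2 ⟨ht.1, ht.2⟩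
    have hlo := (aux_key hα ht').1
    have hrp : ((1 + t ^ 2) / 2 : ℝ) ^ (α - 1) ≤ (2 : ℝ) ^ (1 - α) := by
      have h1 : ((1 + t ^ 2) / 2 : ℝ) ^ (α - 1) ≤ (2⁻¹ : ℝ) ^ (α - 1) :=
        Real.rpow_le_rpow_of_nonpos (by norm_num) hlo (by linarith [hα.2])
      have h2 : ((2 : ℝ)⁻¹) ^ (α - 1) = (2 : ℝ) ^ (1 - α) := by
        rw [Real.inv_rpow (by norm_num), ← Real.rpow_neg (by norm_num)]
        ring_nf
      linarith [h1, h2.le, h2.ge]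
    have hrpos : (0 : ℝ) ≤ ((1 + t ^ 2) / 2 : ℝ) ^ (α - 1) :=
      Real.rpow_nonneg (hpos t).le _
    have : ‖f' t‖ = |t| * α * ((1 + t ^ 2) / 2) ^ (α - 1) := by
      rw [hf', Real.norm_eq_abs, abs_mul, abs_mul, abs_of_pos hα.1, abs_of_nonneg hrpos]
    rw [this]
    calc |t| * α * ((1 + t ^ 2) / 2) ^ (α - 1)
        ≤ 1 * α * ((2 : ℝ) ^ (1 - α)) := by
          apply mul_le_mul
          · exact mul_le_mul_of_nonneg_right ht' hα.1.le
          · exact hrp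
          · exact hrpos
          · have := hα.1; nlinarith
      _ = α * (2 : ℝ) ^ (1 - α) := by ring
  have hmvt : ∀ s ∈ Set.Icc (-1 : ℝ) 1, ∀ t ∈ Set.Icc (-1 : ℝ) 1,
      ‖f s - f t‖ ≤ α * (2 : ℝ) ^ (1 - α) * ‖s - t‖ := by
    intro s hs t ht
    exact Convex.norm_image_sub_le_of_norm_hasDerivWithin_le
      (fun z hz => (hderiv z).hasDerivWithinAt) hbound (convex_Icc _ _) ht hs
  -- part 1: MapsTo
  have hmaps : Set.MapsTo T (Metric.closedBall (0 : X) 1) (Metric.closedBall (0 : X) 1) := by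
    intro x hx
    rw [Metric.mem_closedBall, dist_zero_right, hTdef, norm_smul, he, mul_one]
    have h := aux_key hα (hφbound x hx)
    have : (0:ℝ) ≤ ((1 + (φ x) ^ 2) / 2) ^ α := Real.rpow_nonneg (hpos _).le _
    rw [Real.norm_eq_abs, abs_of_nonneg this]
    exact h.2.2
  refine ⟨hmaps, ?_, ?_⟩
  · -- Lipschitz
    intro x hx y hy
    have hx' : φ x ∈ Set.Icc (-1:ℝ) 1 := by
      have := abs_le.1 (hφbound x hx); exact ⟨this.1, this.2⟩
    have hy' : φ y ∈ Set.Icc (-1:ℝ) 1 := by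
      have := abs_le.1 (hφbound y hy); exact ⟨this.1, this.2⟩
    have h1 : ‖T x - T y‖ = ‖f (φ x) - f (φ y)‖ := by
      rw [hTdef, hTdef, ← sub_smul, norm_smul, he, mul_one]
    have h2 := hmvt (φ x) hx' (φ y) hy'
    have h3 : ‖φ x - φ y‖ ≤ ‖x - y‖ := by
      calc ‖φ x - φ y‖ = ‖φ (x - y)‖ := by rw [map_sub]
        _ ≤ ‖φ‖ * ‖x - y‖ := φ.le_opNorm _
        _ ≤ 1 * ‖x - y‖ := mul_le_mul_of_nonneg_right hφ (norm_nonneg _)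
        _ = ‖x - y‖ := one_mul _
    have hC : (0:ℝ) ≤ α * (2 : ℝ) ^ (1 - α) :=
      mul_nonneg hα.1.le (Real.rpow_nonneg (by norm_num) _)
    calc ‖T x - T y‖ = ‖f (φ x) - f (φ y)‖ := h1
      _ ≤ α * (2 : ℝ) ^ (1 - α) * ‖φ x - φ y‖ := h2
      _ ≤ α * (2 : ℝ) ^ (1 - α) * ‖x - y‖ := mul_le_mul_of_nonneg_left h3 hC
  · -- fixed points
    ext x
    simp only [Set.mem_setOf_eq, Set.mem_singleton_iff]
    constructor
    · rintro ⟨hx, hfx⟩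
      set t := φ x with htdef
      have habs : |t| ≤ 1 := hφbound x hx
      have ht1 : t ≤ 1 := (abs_le.1 habs).2
      have heq : ((1 + t ^ 2) / 2) ^ α = t := by
        have := congrArg φ hfx
        rwa [hTdef, map_smul, hφe, smul_eq_mul, mul_one] at this
      have htpos : 0 < t := heq ▸ Real.rpow_pos_of_pos (hpos t) α
      have ht : t = 1 := by
        by_contra hne
        have hlt : t < 1 := lt_of_le_of_ne ht1 hne
        have hgt : t < (1 + t ^ 2) / 2 := by nlinarith
        have h1 : t ^ α < ((1 + t ^ 2) / 2) ^ α :=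
          Real.rpow_lt_rpow htpos.le hgt hα.1
        have h2 : t ≤ t ^ α := by
          have := Real.rpow_le_rpow_of_exponent_ge htpos ht1 hα.2.le
          simpa using this
        linarith [heq.le, heq.ge]
      rw [hfx.symm, hTdef, htdef.symm, ht]
      norm_num
    · rintro rfl
      constructor
      · rw [Metric.mem_closedBall, dist_zero_right, he]
      · rw [hTdef, hφe]
        norm_num
end

section
/- Let X be a Banach space, α ∈ (0,1), and suppose T: B_X → B_X satisfies ‖Tx − Ty‖ ≤ ‖x − y‖^α for all x, y in the closed unit ball B_X, where dim X ≥ 1. Then T is not surjective onto B_X. -/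
open Metric Set

theorem stmt_8 {X : Type*} [NormedAddCommGroup X] [NormedSpace ℝ X] [CompleteSpace X]
    [Nontrivial X] (α : ℝ) (hα : α ∈ Set.Ioo (0 : ℝ) 1)
    (T : X → X) (hmap : Set.MapsTo T (Metric.closedBall (0 : X) 1) (Metric.closedBall (0 : X) 1))
    (hT : ∀ x ∈ Metric.closedBall (0 : X) 1, ∀ y ∈ Metric.closedBall (0 : X) 1,
      ‖T x - T y‖ ≤ ‖x - y‖ ^ α) :
    ¬ Set.SurjOn T (Metric.closedBall (0 : X) 1) (Metric.closedBall (0 : X) 1) := by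
  intro hsurj
  obtain ⟨u, hu⟩ := exists_norm_eq X (le_of_lt one_pos)
  have humem : u ∈ Metric.closedBall (0 : X) 1 := by
    simp [mem_closedBall, dist_eq_norm, hu]
  have hnumem : -u ∈ Metric.closedBall (0 : X) 1 := by
    simp [mem_closedBall, dist_eq_norm, hu]
  obtain ⟨y, hy, hTy⟩ := hsurj humem
  obtain ⟨z, hz, hTz⟩ := hsurj hnumem
  have hy1 : ‖y‖ ≤ 1 := by simpa [mem_closedBall, dist_eq_norm] using hy
  have hz1 : ‖z‖ ≤ 1 := by simpa [mem_closedBall, dist_eq_norm] using hz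
  have h2 : (2 : ℝ) ≤ ‖y - z‖ ^ α := by
    have := hT y hy z hz
    rw [hTy, hTz] at this
    calc (2 : ℝ) = ‖u - -u‖ := by
          rw [sub_neg_eq_add, ← two_smul ℝ u, norm_smul, hu]; norm_num
      _ ≤ ‖y - z‖ ^ α := this
  have hyz : ‖y - z‖ ≤ 2 := by
    calc ‖y - z‖ ≤ ‖y‖ + ‖z‖ := norm_sub_le y z
      _ ≤ 2 := by linarith
  have h3 : ‖y - z‖ ^ α ≤ (2 : ℝ) ^ α :=
    Real.rpow_le_rpow (norm_nonneg _) hyz (le_of_lt hα.1)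
  have h4 : (2 : ℝ) ^ α < 2 := by
    have := Real.rpow_lt_rpow_of_exponent_lt (x := (2 : ℝ)) one_lt_two hα.2
    simpa using this
  linarith
end

section
/- Let X be a Banach space and suppose there is a nonexpansive map F: B_X → B_X with no fixed points. Fix α, λ ∈ (0,1) and r > 0 with 2r^(1−α) ≤ λ. Let R: B_X → B_X(r) be the radial retraction R(x) = x if ‖x‖ ≤ r and R(x) = r x/‖x‖ otherwise, and define T: B_X → B_X by T(x) = r·F(R(x)/r). Then T has no fixed points, and ‖Tx − Ty‖ ≤ λ‖x − y‖^α for all x, y ∈ B_X. -/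
open Metric Set

private noncomputable def radR {X : Type*} [NormedAddCommGroup X] [NormedSpace ℝ X]
    (r : ℝ) (x : X) : X :=
  if ‖x‖ ≤ r then x else (r * ‖x‖⁻¹) • x

private lemma radR_norm_le {X : Type*} [NormedAddCommGroup X] [NormedSpace ℝ X]
    {r : ℝ} (hr : 0 < r) (x : X) : ‖radR r x‖ ≤ r := by
  unfold radR
  split_ifs with h
  · exact h
  · push_neg at h
    have hx : 0 < ‖x‖ := lt_trans hr h
    rw [norm_smul, Real.norm_eq_abs, abs_of_pos (by positivity), mul_assoc,
      inv_mul_cancel₀ hx.ne', mul_one]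

private lemma radR_lip_aux {X : Type*} [NormedAddCommGroup X] [NormedSpace ℝ X]
    {r : ℝ} (hr : 0 < r) (x y : X) (hyx : ‖y‖ ≤ ‖x‖) :
    ‖radR r x - radR r y‖ ≤ 2 * ‖x - y‖ := by
  unfold radR
  have hd : ‖x‖ - ‖y‖ ≤ ‖x - y‖ := norm_sub_norm_le x y
  have hd0 : (0:ℝ) ≤ ‖x - y‖ := norm_nonneg _
  split_ifs with h1 h2 h2
  · linarith
  · push_neg at h2; linarith
  · -- ‖x‖ > r, ‖y‖ ≤ r
    push_neg at h1
    have hx : 0 < ‖x‖ := lt_trans hr h1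
    set c : ℝ := r * ‖x‖⁻¹ with hc
    have hc0 : 0 < c := by positivity
    have hcx : c * ‖x‖ = r := by
      rw [hc, mul_assoc, inv_mul_cancel₀ hx.ne', mul_one]
    have hc1 : c ≤ 1 := by nlinarith
    calc ‖c • x - y‖ ≤ ‖c • x - c • y‖ + ‖c • y - y‖ := norm_sub_le_norm_sub_add_norm_sub _ _ _
      _ = c * ‖x - y‖ + (1 - c) * ‖y‖ := by
          rw [← smul_sub, norm_smul, Real.norm_eq_abs, abs_of_pos hc0]
          congr 1
          rw [show c • y - y = (c - 1) • y by rw [sub_smul, one_smul], norm_smul,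
            Real.norm_eq_abs, abs_of_nonpos (by linarith)]
          ring
      _ ≤ 2 * ‖x - y‖ := by nlinarith [norm_nonneg y, mul_nonneg (sub_nonneg.2 hc1) (sub_nonneg.2 hyx)]
  · -- both > r
    push_neg at h1 h2
    have hx : 0 < ‖x‖ := lt_trans hr h1
    have hy : 0 < ‖y‖ := lt_trans hr h2
    set c : ℝ := r * ‖x‖⁻¹ with hc
    set c' : ℝ := r * ‖y‖⁻¹ with hc'
    have hc0 : 0 < c := by positivity
    have hc'0 : 0 < c' := by positivity
    have hcx : c * ‖x‖ = r := by rw [hc, mul_assoc, inv_mul_cancel₀ hx.ne', mul_one]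
    have hc'y : c' * ‖y‖ = r := by rw [hc', mul_assoc, inv_mul_cancel₀ hy.ne', mul_one]
    have hc1 : c ≤ 1 := by nlinarith
    have hcc' : c ≤ c' := by
      rw [hc, hc']
      gcongr
    calc ‖c • x - c' • y‖ ≤ ‖c • x - c • y‖ + ‖c • y - c' • y‖ :=
          norm_sub_le_norm_sub_add_norm_sub _ _ _
      _ = c * ‖x - y‖ + (c' - c) * ‖y‖ := by
          rw [← smul_sub, norm_smul, Real.norm_eq_abs, abs_of_pos hc0]
          congr 1
          rw [show c • y - c' • y = (c - c') • y by rw [sub_smul], norm_smul,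
            Real.norm_eq_abs, abs_of_nonpos (by linarith)]
          ring
      _ ≤ 2 * ‖x - y‖ := by
          nlinarith [mul_nonneg hc0.le (sub_nonneg.2 hd),
            mul_nonneg (sub_nonneg.2 hc1) hd0,
            mul_nonneg (sub_nonneg.2 hc1) (sub_nonneg.2 hyx)]

private lemma radR_lip {X : Type*} [NormedAddCommGroup X] [NormedSpace ℝ X]
    {r : ℝ} (hr : 0 < r) (x y : X) :
    ‖radR r x - radR r y‖ ≤ 2 * ‖x - y‖ := by
  rcases le_total ‖y‖ ‖x‖ with h | h
  · exact radR_lip_aux hr x y h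
  · rw [norm_sub_rev, norm_sub_rev x y]
    exact radR_lip_aux hr y x h

theorem stmt_10 {X : Type*} [NormedAddCommGroup X] [NormedSpace ℝ X] [CompleteSpace X]
    (F : X → X)
    (hmap : Set.MapsTo F (Metric.closedBall (0 : X) 1) (Metric.closedBall (0 : X) 1))
    (hF : ∀ x ∈ Metric.closedBall (0 : X) 1, ∀ y ∈ Metric.closedBall (0 : X) 1,
      ‖F x - F y‖ ≤ ‖x - y‖)
    (hfpf : ∀ x ∈ Metric.closedBall (0 : X) 1, F x ≠ x)
    (α lam r : ℝ) (hα : α ∈ Set.Ioo (0 : ℝ) 1) (hlam : lam ∈ Set.Ioo (0 : ℝ) 1)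
    (hr : 0 < r) (hrα : 2 * r ^ (1 - α) ≤ lam)
    (T : X → X)
    (hTdef : ∀ x, T x = r • F (r⁻¹ • (if ‖x‖ ≤ r then x else (r * ‖x‖⁻¹) • x))) :
    (∀ x ∈ Metric.closedBall (0 : X) 1, T x ≠ x) ∧
      ∀ x ∈ Metric.closedBall (0 : X) 1, ∀ y ∈ Metric.closedBall (0 : X) 1,
        ‖T x - T y‖ ≤ lam * ‖x - y‖ ^ α := by
  obtain ⟨hα0, hα1⟩ := hα
  obtain ⟨hlam0, hlam1⟩ := hlam
  have hRT : ∀ x, T x = r • F (r⁻¹ • radR r x) := hTdef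
  have hmem : ∀ x : X, r⁻¹ • radR r x ∈ Metric.closedBall (0 : X) 1 := by
    intro x
    rw [Metric.mem_closedBall, dist_zero_right, norm_smul, Real.norm_eq_abs,
      abs_of_pos (inv_pos.mpr hr)]
    calc r⁻¹ * ‖radR r x‖ ≤ r⁻¹ * r := by gcongr; exact radR_norm_le hr x
      _ = 1 := inv_mul_cancel₀ hr.ne'
  constructor
  · -- no fixed points
    intro x hx hTx
    have h1 : ‖x‖ ≤ r := by
      rw [← hTx, hRT x, norm_smul, Real.norm_eq_abs, abs_of_pos hr]
      have hFm := hmap (hmem x)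
      rw [Metric.mem_closedBall, dist_zero_right] at hFm
      calc r * ‖F (r⁻¹ • radR r x)‖ ≤ r * 1 := by gcongr
        _ = r := mul_one r
    have h2 : radR r x = x := by unfold radR; rw [if_pos h1]
    have h3 : x = r • F (r⁻¹ • x) := by rw [← h2, ← hRT x, hTx, h2]
    have h4 : F (r⁻¹ • x) = r⁻¹ • x := by
      conv_rhs => rw [h3]
      rw [smul_smul, inv_mul_cancel₀ hr.ne', one_smul]
    have h5 : r⁻¹ • x ∈ Metric.closedBall (0 : X) 1 := by rw [← h2]; exact hmem x
    exact hfpf _ h5 h4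
  · -- Hölder estimate
    intro x hx y hy
    have key : ‖T x - T y‖ ≤ ‖radR r x - radR r y‖ := by
      rw [hRT x, hRT y, ← smul_sub, norm_smul, Real.norm_eq_abs, abs_of_pos hr]
      calc r * ‖F (r⁻¹ • radR r x) - F (r⁻¹ • radR r y)‖
          ≤ r * ‖r⁻¹ • radR r x - r⁻¹ • radR r y‖ := by
            gcongr; exact hF _ (hmem x) _ (hmem y)
        _ = ‖radR r x - radR r y‖ := by
            rw [← smul_sub, norm_smul, Real.norm_eq_abs, abs_of_pos (inv_pos.mpr hr),
              ← mul_assoc, mul_inv_cancel₀ hr.ne', one_mul]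
    set a : ℝ := ‖radR r x - radR r y‖ with ha
    have ha0 : 0 ≤ a := norm_nonneg _
    set d : ℝ := ‖x - y‖ with hd
    have hd0 : 0 ≤ d := norm_nonneg _
    have hdα : 0 ≤ d ^ α := Real.rpow_nonneg hd0 α
    have har : a ≤ 2 * r := by
      calc a ≤ ‖radR r x‖ + ‖radR r y‖ := norm_sub_le _ _
        _ ≤ r + r := add_le_add (radR_norm_le hr x) (radR_norm_le hr y)
        _ = 2 * r := by ring
    have had : a ≤ 2 * d := radR_lip hr x y
    have key2 : a ≤ lam * d ^ α := by
      rcases eq_or_lt_of_le ha0 with h0 | h0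
      · rw [← h0]; positivity
      · have h1α : (0:ℝ) ≤ 1 - α := by linarith
        calc a = a ^ (1 - α) * a ^ α := by
              rw [← Real.rpow_add h0, sub_add_cancel, Real.rpow_one]
          _ ≤ (2 * r) ^ (1 - α) * (2 * d) ^ α := by
              gcongr
          _ = (2 ^ (1 - α) * 2 ^ α) * (r ^ (1 - α) * d ^ α) := by
              rw [Real.mul_rpow (by norm_num) hr.le, Real.mul_rpow (by norm_num) hd0]
              ring
          _ = 2 * (r ^ (1 - α) * d ^ α) := by
              rw [← Real.rpow_add (by norm_num : (0:ℝ) < 2), sub_add_cancel, Real.rpow_one]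
          _ = (2 * r ^ (1 - α)) * d ^ α := by ring
          _ ≤ lam * d ^ α := by gcongr
    exact le_trans key key2
end

section
/- Fix α, λ ∈ (0,1), let p ∈ [1, ∞), set r = λ^(p/(1−α))/2, and let K = {x = (tᵢ) ∈ ℓp : tᵢ ≥ 0 for all i and Σᵢ tᵢ = r}. Then the right shift F: K → K, F(t₁, t₂, …) = (0, t₁, t₂, …), maps K into K, has no fixed point, and satisfies ‖Fⁿx − Fⁿy‖_p ≤ λ‖x − y‖_p^α for all x, y ∈ K and n ∈ ℕ. -/
theorem stmt_12 (p α lam : ℝ) (hp : 1 ≤ p)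
    (hα : α ∈ Set.Ioo (0 : ℝ) 1) (hlam : lam ∈ Set.Ioo (0 : ℝ) 1)
    (r : ℝ) (hr : r = lam ^ (p / (1 - α)) / 2)
    (K : Set (ℕ → ℝ))
    (hK : K = {x : ℕ → ℝ | (∀ i, 0 ≤ x i) ∧ Summable x ∧ ∑' i, x i = r})
    (F : (ℕ → ℝ) → (ℕ → ℝ))
    (hF : ∀ x, ∀ n, F x n = if n = 0 then 0 else x (n - 1))
    (nrm : (ℕ → ℝ) → ℝ) (hnrm : ∀ x, nrm x = (∑' i, |x i| ^ p) ^ (1 / p)) :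
    Set.MapsTo F K K ∧ (∀ x ∈ K, F x ≠ x) ∧
      ∀ n : ℕ, ∀ x ∈ K, ∀ y ∈ K,
        nrm (F^[n] x - F^[n] y) ≤ lam * nrm (x - y) ^ α := by
  obtain ⟨hα0, hα1⟩ := hα
  obtain ⟨hl0, hl1⟩ := hlam
  have hp0 : (0:ℝ) < p := lt_of_lt_of_le one_pos hp
  have h1α : (0:ℝ) < 1 - α := by linarith
  have hr0 : 0 < r := by
    rw [hr]
    have : (0:ℝ) < lam ^ (p / (1 - α)) := Real.rpow_pos_of_pos hl0 _
    linarith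
  have h2r : 2 * r = lam ^ (p / (1 - α)) := by rw [hr]; ring
  have h2r1 : 2 * r < 1 := by
    rw [h2r]; exact Real.rpow_lt_one hl0.le hl1 (by positivity)
  have hFiter : ∀ (n : ℕ) (x : ℕ → ℝ) (k : ℕ),
      F^[n] x k = if k < n then 0 else x (k - n) := by
    intro n
    induction n with
    | zero => intro x k; simp
    | succ n ih =>
      intro x k
      rw [Function.iterate_succ_apply', hF]
      cases k with
      | zero => simp
      | succ m => simp [ih, Nat.succ_lt_succ_iff, Nat.succ_sub_succ]
  subst hK
  refine ⟨?_, ?_, ?_⟩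
  · rintro x ⟨hx0, hxs, hxr⟩
    have hinj : Function.Injective (fun i : ℕ => i + 1) := fun a b h => by
      simp only [] at h; omega
    have hsupp : ∀ k, k ∉ Set.range (fun i : ℕ => i + 1) → F x k = 0 := by
      intro k hk
      have hk0 : k = 0 := by
        by_contra h
        exact hk ⟨k - 1, by simp only []; omega⟩
      rw [hF, if_pos hk0]
    have hcomp : (fun i => F x (i + 1)) = x := by
      funext i; rw [hF]; simp
    refine ⟨?_, ?_, ?_⟩
    · intro i
      rw [hF]
      split_ifs with h
      · exact le_rfl
      · exact hx0 _
    · refine (hinj.summable_iff hsupp).mp ?_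
      show Summable (fun i => F x (i + 1))
      rw [hcomp]; exact hxs
    · have hsupp' : Function.support (F x) ⊆ Set.range (fun i : ℕ => i + 1) :=
        fun k hk => by by_contra h; exact hk (hsupp k h)
      calc ∑' i, F x i = ∑' i, F x (i + 1) := (hinj.tsum_eq hsupp').symm
        _ = ∑' i, x i := by rw [hcomp]
        _ = r := hxr
  · rintro x ⟨hx0, hxs, hxr⟩ heq
    have h0 : x 0 = 0 := by rw [← heq, hF]; simp
    have hn : ∀ n, x (n + 1) = x n := by
      intro n
      nth_rewrite 1 [← heq]
      rw [hF]; simp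
    have hzero : ∀ n, x n = 0 := by
      intro n
      induction n with
      | zero => exact h0
      | succ m ih => rw [hn]; exact ih
    have hx : x = 0 := funext hzero
    rw [hx] at hxr
    simp at hxr
    linarith
  · intro n x hx y hy
    obtain ⟨hx0, hxs, hxr⟩ := hx
    obtain ⟨hy0, hys, hyr⟩ := hy
    set g := F^[n] x - F^[n] y with hg
    have hgk : ∀ k, g k = if k < n then 0 else (x (k - n) - y (k - n)) := by
      intro k
      simp only [hg, Pi.sub_apply, hFiter]
      split_ifs with h <;> simp
    have hinj : Function.Injective (fun i : ℕ => i + n) := fun a b h => by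
      simp only [] at h; omega
    have hsupp : ∀ k, k ∉ Set.range (fun i : ℕ => i + n) → |g k| ^ p = 0 := by
      intro k hk
      have hkn : k < n := by
        by_contra h
        exact hk ⟨k - n, by simp only []; omega⟩
      rw [hgk, if_pos hkn]
      simp [Real.zero_rpow hp0.ne']
    have hsupp' : Function.support (fun k => |g k| ^ p) ⊆ Set.range (fun i : ℕ => i + n) :=
      fun k hk => by by_contra h; exact hk (hsupp k h)
    have htsum : ∑' k, |g k| ^ p = ∑' i, |x i - y i| ^ p := by
      rw [← hinj.tsum_eq hsupp']
      refine tsum_congr fun i => ?_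
      rw [hgk, if_neg (by omega)]
      simp
    have hub : ∀ i, |x i - y i| ^ p ≤ x i + y i := by
      intro i
      have hx1 : x i ≤ r := Summable.le_tsum hxs i (fun j _ => hx0 j) |>.trans_eq hxr
      have hy1 : y i ≤ r := Summable.le_tsum hys i (fun j _ => hy0 j) |>.trans_eq hyr
      have h1 : |x i - y i| ≤ x i + y i :=
        abs_le.mpr ⟨by linarith [hx0 i, hy0 i], by linarith [hx0 i, hy0 i]⟩
      rcases eq_or_lt_of_le (abs_nonneg (x i - y i)) with h0 | h0
      · rw [← h0, Real.zero_rpow hp0.ne']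
        linarith [hx0 i, hy0 i]
      · calc |x i - y i| ^ p ≤ |x i - y i| ^ (1:ℝ) :=
            Real.rpow_le_rpow_of_exponent_ge h0 (by linarith) hp
          _ = |x i - y i| := Real.rpow_one _
          _ ≤ x i + y i := h1
    have hnn : ∀ i, 0 ≤ |x i - y i| ^ p := fun i => Real.rpow_nonneg (abs_nonneg _) p
    have hsumxy : Summable (fun i => x i + y i) := hxs.add hys
    have hS : Summable (fun i => |x i - y i| ^ p) :=
      Summable.of_nonneg_of_le hnn hub hsumxy
    have hSle : ∑' i, |x i - y i| ^ p ≤ lam ^ (p / (1 - α)) := by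
      calc ∑' i, |x i - y i| ^ p ≤ ∑' i, (x i + y i) := Summable.tsum_le_tsum hub hS hsumxy
        _ = r + r := by rw [Summable.tsum_add hxs hys, hxr, hyr]
        _ = lam ^ (p / (1 - α)) := by linarith
    have hS0 : 0 ≤ ∑' i, |x i - y i| ^ p := tsum_nonneg hnn
    have hd : nrm (x - y) = (∑' i, |x i - y i| ^ p) ^ (1 / p) := by
      rw [hnrm]
      simp [Pi.sub_apply]
    have hd0 : 0 ≤ nrm (x - y) := by
      rw [hd]; positivity
    have hdle : nrm (x - y) ≤ lam ^ (1 / (1 - α)) := by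
      rw [hd]
      calc (∑' i, |x i - y i| ^ p) ^ (1 / p)
          ≤ (lam ^ (p / (1 - α))) ^ (1 / p) :=
            Real.rpow_le_rpow hS0 hSle (by positivity)
        _ = lam ^ (1 / (1 - α)) := by
            rw [← Real.rpow_mul hl0.le]
            congr 1
            field_simp
    rw [hnrm g, htsum, ← hd]
    rcases eq_or_lt_of_le hd0 with h0 | h0
    · rw [← h0, Real.zero_rpow hα0.ne']
      simp
    · have h1 : nrm (x - y) ^ (1 - α) ≤ lam := by
        calc nrm (x - y) ^ (1 - α) ≤ (lam ^ (1 / (1 - α))) ^ (1 - α) :=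
            Real.rpow_le_rpow hd0 hdle h1α.le
          _ = lam := by
            rw [← Real.rpow_mul hl0.le, one_div, inv_mul_cancel₀ h1α.ne', Real.rpow_one]
      calc nrm (x - y) = nrm (x - y) ^ (1 - α) * nrm (x - y) ^ α := by
            rw [← Real.rpow_add h0, sub_add_cancel, Real.rpow_one]
        _ ≤ lam * nrm (x - y) ^ α :=
            mul_le_mul_of_nonneg_right h1 (Real.rpow_nonneg hd0 α)
end

section
/- Let α ∈ (0,1) and let N ∈ ℕ satisfy 2 ≤ N^α. Let K = {x = (tₙ) ∈ c : 0 ≤ tₙ ≤ 1/N for all n} (convergent sequences with values in [0, 1/N], sup norm) and define F: K → K by F(t₁, t₂, t₃, …) = (1/N, t₂·t₁^α, t₁, t₂, t₃, …). Then F maps K into itself and satisfies ‖F(x) − F(y)‖∞ ≤ ‖x − y‖∞^α for all x, y ∈ K, and F has no fixed point. -/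
open Filter Topology

private lemma rpow_subadd (a b p : ℝ) (ha : 0 ≤ a) (hb : 0 ≤ b) (hp : 0 ≤ p) (hp1 : p ≤ 1) :
    (a + b) ^ p ≤ a ^ p + b ^ p := by
  have := NNReal.rpow_add_le_add_rpow a.toNNReal b.toNNReal hp hp1
  have h := NNReal.coe_le_coe.2 this
  push_cast [NNReal.coe_rpow, Real.coe_toNNReal a ha, Real.coe_toNNReal b hb] at h
  exact h

private lemma rpow_sub_le (a b p : ℝ) (hb : 0 ≤ b) (hab : b ≤ a) (hp : 0 ≤ p) (hp1 : p ≤ 1) :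
    a ^ p - b ^ p ≤ (a - b) ^ p := by
  have h : a ^ p ≤ (a - b) ^ p + b ^ p := by
    have := rpow_subadd (a - b) b p (by linarith) hb hp hp1
    simpa using this
  linarith

theorem stmt_14 (α : ℝ) (hα : α ∈ Set.Ioo (0 : ℝ) 1)
    (N : ℕ) (hN : 2 ≤ (N : ℝ) ^ α)
    (K : Set (ℕ → ℝ))
    (hK : K = {x : ℕ → ℝ | (∃ l : ℝ, Tendsto x atTop (𝓝 l)) ∧
      ∀ n, 0 ≤ x n ∧ x n ≤ 1 / N})
    (F : (ℕ → ℝ) → (ℕ → ℝ))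
    (hF : ∀ x : ℕ → ℝ, F x 0 = 1 / N ∧ F x 1 = x 1 * x 0 ^ α ∧ ∀ n, F x (n + 2) = x n) :
    Set.MapsTo F K K ∧
      (∀ x ∈ K, ∀ y ∈ K, (⨆ n, |F x n - F y n|) ≤ (⨆ n, |x n - y n|) ^ α) ∧
      ∀ x ∈ K, F x ≠ x := by
  obtain ⟨hα0, hα1⟩ := hα
  -- N ≥ 2
  have hN2 : 2 ≤ N := by
    by_contra h
    push_neg at h
    interval_cases N
    · rw [Nat.cast_zero, Real.zero_rpow (ne_of_gt hα0)] at hN; linarith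
    · rw [Nat.cast_one, Real.one_rpow] at hN; linarith
  have hNpos : (0 : ℝ) < N := by positivity
  have hinv_pos : (0 : ℝ) < 1 / N := by positivity
  have hinv_le : (1 : ℝ) / N ≤ 1 / 2 := by
    apply div_le_div_of_nonneg_left (by norm_num) (by norm_num)
    exact_mod_cast hN2
  -- (1/N)^α ≤ 1/2
  have hinvα : ((1 : ℝ) / N) ^ α ≤ 1 / 2 := by
    rw [Real.div_rpow (by norm_num) (le_of_lt hNpos), Real.one_rpow]
    rw [div_le_div_iff₀ (by positivity) (by norm_num)]
    linarith
  have hinvα_pos : (0 : ℝ) < ((1 : ℝ) / N) ^ α := Real.rpow_pos_of_pos hinv_pos α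
  constructor
  · -- MapsTo
    intro x hx
    rw [hK] at hx ⊢
    obtain ⟨⟨l, hl⟩, hb⟩ := hx
    obtain ⟨h0, h1, h2⟩ := hF x
    refine ⟨⟨l, ?_⟩, ?_⟩
    · rw [← tendsto_add_atTop_iff_nat 2]
      exact hl.congr fun n => (h2 n).symm
    · intro n
      match n with
      | 0 => exact ⟨by rw [h0]; positivity, le_of_eq h0⟩
      | 1 =>
        rw [h1]
        constructor
        · have := (hb 0).1
          have := (hb 1).1
          positivity
        · calc x 1 * x 0 ^ α ≤ (1 / N) * ((1 / N : ℝ)) ^ α := by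
                apply mul_le_mul (hb 1).2 (Real.rpow_le_rpow (hb 0).1 (hb 0).2 (le_of_lt hα0))
                  (Real.rpow_nonneg (hb 0).1 α) (le_of_lt hinv_pos)
            _ ≤ (1 / N) * 1 := by nlinarith
            _ = 1 / N := mul_one _
      | (n + 2) => rw [h2 n]; exact hb n
  constructor
  · -- Hölder estimate
    intro x hx y hy
    rw [hK] at hx hy
    obtain ⟨-, hbx⟩ := hx
    obtain ⟨-, hby⟩ := hy
    obtain ⟨hx0, hx1, hx2⟩ := hF x
    obtain ⟨hy0, hy1, hy2⟩ := hF y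
    set D : ℝ := ⨆ n, |x n - y n| with hD
    have hbdd : BddAbove (Set.range fun n => |x n - y n|) := by
      refine ⟨1 / N, ?_⟩
      rintro - ⟨n, rfl⟩
      have := (hbx n).1; have := (hbx n).2; have := (hby n).1; have := (hby n).2
      rw [abs_le]; constructor <;> linarith
    have hDle : ∀ n, |x n - y n| ≤ D := fun n => le_ciSup hbdd n
    have hD0 : 0 ≤ D := le_trans (abs_nonneg _) (hDle 0)
    have hD1 : D ≤ 1 / N := by
      apply ciSup_le
      intro n
      have := (hbx n).1; have := (hbx n).2; have := (hby n).1; have := (hby n).2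
      rw [abs_le]; constructor <;> linarith
    have hDα0 : 0 ≤ D ^ α := Real.rpow_nonneg hD0 α
    have hDDα : D ≤ D ^ α := by
      rcases eq_or_lt_of_le hD0 with h | h
      · rw [← h, Real.zero_rpow (ne_of_gt hα0)]
      · calc D = D ^ (1 : ℝ) := (Real.rpow_one D).symm
          _ ≤ D ^ α := Real.rpow_le_rpow_of_exponent_ge h (by linarith) (le_of_lt hα1)
    apply ciSup_le
    intro n
    match n with
    | 0 => rw [hx0, hy0]; simpa using hDα0
    | 1 =>
      rw [hx1, hy1]
      -- |x1 x0^α - y1 y0^α| ≤ x1 |x0^α - y0^α| + |x1 - y1| y0^α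
      have key : |x 1 * x 0 ^ α - y 1 * y 0 ^ α| ≤
          x 1 * |x 0 ^ α - y 0 ^ α| + |x 1 - y 1| * y 0 ^ α := by
        have : x 1 * x 0 ^ α - y 1 * y 0 ^ α
            = x 1 * (x 0 ^ α - y 0 ^ α) + (x 1 - y 1) * y 0 ^ α := by ring
        rw [this]
        refine le_trans (abs_add_le _ _) ?_
        rw [abs_mul, abs_mul, abs_of_nonneg (hbx 1).1,
          abs_of_nonneg (Real.rpow_nonneg (hby 0).1 α)]
      have hpow : |x 0 ^ α - y 0 ^ α| ≤ |x 0 - y 0| ^ α := by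
        rcases le_total (y 0) (x 0) with h | h
        · rw [abs_of_nonneg (sub_nonneg.2 (Real.rpow_le_rpow (hby 0).1 h (le_of_lt hα0))),
            abs_of_nonneg (sub_nonneg.2 h)]
          exact rpow_sub_le _ _ _ (hby 0).1 h (le_of_lt hα0) (le_of_lt hα1)
        · rw [abs_of_nonpos (sub_nonpos.2 (Real.rpow_le_rpow (hbx 0).1 h (le_of_lt hα0))),
            abs_of_nonpos (sub_nonpos.2 h), neg_sub, neg_sub]
          exact rpow_sub_le _ _ _ (hbx 0).1 h (le_of_lt hα0) (le_of_lt hα1)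
      have h1 : |x 0 - y 0| ^ α ≤ D ^ α :=
        Real.rpow_le_rpow (abs_nonneg _) (hDle 0) (le_of_lt hα0)
      have h2 : x 1 * |x 0 ^ α - y 0 ^ α| ≤ (1 / N) * D ^ α := by
        apply mul_le_mul (hbx 1).2 (le_trans hpow h1) (abs_nonneg _) (le_of_lt hinv_pos)
      have h3 : |x 1 - y 1| * y 0 ^ α ≤ D * (1 / 2) := by
        apply mul_le_mul (hDle 1) _ (Real.rpow_nonneg (hby 0).1 α) hD0
        exact le_trans (Real.rpow_le_rpow (hby 0).1 (hby 0).2 (le_of_lt hα0)) hinvα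
      have h4 : D * (1 / 2) ≤ D ^ α * (1 / 2) := by nlinarith
      calc |x 1 * x 0 ^ α - y 1 * y 0 ^ α| ≤ (1 / N) * D ^ α + D ^ α * (1 / 2) := by linarith
        _ ≤ (1 / 2) * D ^ α + D ^ α * (1 / 2) := by nlinarith
        _ = D ^ α := by ring
    | (n + 2) =>
      rw [hx2 n, hy2 n]
      exact le_trans (hDle n) hDDα
  · -- no fixed point
    intro x hx hfix
    rw [hK] at hx
    obtain ⟨⟨l, hl⟩, hb⟩ := hx
    obtain ⟨h0, h1, h2⟩ := hF x
    rw [hfix] at h0 h1 h2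
    -- x 1 = 0
    have hx1 : x 1 = 0 := by
      have hlt : x 0 ^ α < 1 := by
        rw [h0]; nlinarith
      by_contra h
      have hpos : 0 < x 1 := lt_of_le_of_ne (hb 1).1 (Ne.symm h)
      nlinarith [Real.rpow_nonneg (hb 0).1 α]
    have heven : ∀ n, x (2 * n) = 1 / N := by
      intro n
      induction n with
      | zero => simpa using h0
      | succ k ih => calc x (2 * (k + 1)) = x (2 * k + 2) := by ring_nf
                       _ = x (2 * k) := h2 (2 * k)
                       _ = 1 / N := ih
    have hodd : ∀ n, x (2 * n + 1) = 0 := by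
      intro n
      induction n with
      | zero => simpa using hx1
      | succ k ih => calc x (2 * (k + 1) + 1) = x ((2 * k + 1) + 2) := by ring_nf
                       _ = x (2 * k + 1) := h2 (2 * k + 1)
                       _ = 0 := ih
    have t1 : Tendsto (fun n => x (2 * n)) atTop (𝓝 l) :=
      hl.comp (tendsto_atTop_mono (fun n => Nat.le_mul_of_pos_left n two_pos) tendsto_id)
    have t2 : Tendsto (fun n => x (2 * n + 1)) atTop (𝓝 l) :=
      hl.comp (tendsto_atTop_mono (fun n => le_trans (Nat.le_mul_of_pos_left n two_pos) (Nat.le_succ _)) tendsto_id)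
    have e1 : l = 1 / N := tendsto_nhds_unique (t1.congr heven) tendsto_const_nhds
    have e2 : l = 0 := tendsto_nhds_unique t2 (by simpa [hodd] using tendsto_const_nhds)
    rw [e2] at e1
    exact absurd e1.symm (ne_of_gt hinv_pos)
end

section
/- Fix α ∈ (0,1), and let K = {x = (tᵢ) ∈ ℓ₁ : tᵢ ≥ 0, Σᵢ tᵢ ≤ 1} with the norm ‖x‖ = max(‖x⁺‖₁, ‖x⁻‖₁) on ℓ₁. The map T: K → K defined by T(x) = (1 − Σᵢ tᵢ, t₁, t₂, …) maps K into K, is an isometry for ‖·‖ on K, satisfies ‖Tⁿx − Tⁿy‖ = ‖x−y‖ for all n, and has no fixed point in K. -/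
private lemma max_sub_add' (a b : ℝ) : max (a - b) 0 + b = max a b := by
  rcases le_total a b with h | h
  · rw [max_eq_right (sub_nonpos.mpr h), max_eq_right h]; ring
  · rw [max_eq_left (sub_nonneg.mpr h), max_eq_left h]; ring

private lemma summable_pos_part {d : ℕ → ℝ} (hd : Summable d) :
    Summable (fun n => max (d n) 0) :=
  Summable.of_nonneg_of_le (fun n => le_max_right _ _)
    (fun n => max_le (le_abs_self _) (abs_nonneg _)) hd.abs

private lemma key_norm (d e : ℕ → ℝ) (hd : Summable d)
    (he0 : e 0 = -(∑' i, d i)) (heS : ∀ n, e (n + 1) = d n) :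
    max (∑' i, max (e i) 0) (∑' i, max (-e i) 0)
      = max (∑' i, max (d i) 0) (∑' i, max (-d i) 0) := by
  have hdP : Summable (fun n => max (d n) 0) := summable_pos_part hd
  have hdN : Summable (fun n => max (-d n) 0) := summable_pos_part hd.neg
  have heP : Summable (fun n => max (e n) 0) := by
    have : Summable (fun n => max (e (n + 1)) 0) := by
      simpa [heS] using hdP
    exact (summable_nat_add_iff 1).mp this
  have heN : Summable (fun n => max (-e n) 0) := by
    have : Summable (fun n => max (-e (n + 1)) 0) := by
      simpa [heS] using hdN
    exact (summable_nat_add_iff 1).mp this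
  set P := ∑' i, max (d i) 0 with hP
  set N := ∑' i, max (-d i) 0 with hN
  have hS : ∑' i, d i = P - N := by
    rw [hP, hN, ← Summable.tsum_sub hdP hdN]
    congr 1; funext n; exact (max_zero_sub_eq_self (d n)).symm
  have h1 : ∑' i, max (e i) 0 = max (N - P) 0 + P := by
    rw [Summable.tsum_eq_zero_add heP]
    simp only [heS, he0, hS]
    rw [neg_sub]
  have h2 : ∑' i, max (-e i) 0 = max (P - N) 0 + N := by
    rw [Summable.tsum_eq_zero_add heN]
    simp only [heS, he0, hS, neg_neg]
    rfl
  rw [h1, h2, max_sub_add', max_sub_add', max_comm N P, max_self]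

theorem stmt_19 (α : ℝ) (hα : α ∈ Set.Ioo (0 : ℝ) 1)
    (K : Set (ℕ → ℝ))
    (hK : K = {x : ℕ → ℝ | (∀ i, 0 ≤ x i) ∧ Summable x ∧ ∑' i, x i ≤ 1})
    (nrm : (ℕ → ℝ) → ℝ)
    (hnrm : ∀ x, nrm x = max (∑' i, max (x i) 0) (∑' i, max (-x i) 0))
    (T : (ℕ → ℝ) → (ℕ → ℝ))
    (hT : ∀ x, ∀ n, T x n = if n = 0 then 1 - ∑' i, x i else x (n - 1)) :
    Set.MapsTo T K K ∧
      (∀ x ∈ K, ∀ y ∈ K, nrm (T x - T y) = nrm (x - y)) ∧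
      (∀ n : ℕ, ∀ x ∈ K, ∀ y ∈ K, nrm (T^[n] x - T^[n] y) = nrm (x - y)) ∧
      ∀ x ∈ K, T x ≠ x := by
  subst hK
  have hT0 : ∀ x, T x 0 = 1 - ∑' i, x i := fun x => by simp [hT]
  have hTs : ∀ x n, T x (n + 1) = x n := fun x n => by simp [hT]
  have hmaps : Set.MapsTo T {x : ℕ → ℝ | (∀ i, 0 ≤ x i) ∧ Summable x ∧ ∑' i, x i ≤ 1}
      {x : ℕ → ℝ | (∀ i, 0 ≤ x i) ∧ Summable x ∧ ∑' i, x i ≤ 1} := by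
    rintro x ⟨hpos, hsum, hle⟩
    have hTsum : Summable (T x) := by
      have : Summable (fun n => T x (n + 1)) := by simpa [hTs] using hsum
      exact (summable_nat_add_iff 1).mp this
    refine ⟨fun i => ?_, hTsum, ?_⟩
    · cases i with
      | zero => rw [hT0]; linarith
      | succ n => rw [hTs]; exact hpos n
    · rw [Summable.tsum_eq_zero_add hTsum, hT0]
      simp only [hTs]
      linarith
  have hiso : ∀ x ∈ {x : ℕ → ℝ | (∀ i, 0 ≤ x i) ∧ Summable x ∧ ∑' i, x i ≤ 1},
      ∀ y ∈ {x : ℕ → ℝ | (∀ i, 0 ≤ x i) ∧ Summable x ∧ ∑' i, x i ≤ 1},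
      nrm (T x - T y) = nrm (x - y) := by
    rintro x ⟨hxp, hxs, hxl⟩ y ⟨hyp, hys, hyl⟩
    rw [hnrm, hnrm]
    apply key_norm
    · exact hxs.sub hys
    · show (T x - T y) 0 = _
      simp only [Pi.sub_apply]
      rw [hT0, hT0, Summable.tsum_sub hxs hys]
      ring
    · intro n
      show (T x - T y) (n + 1) = (x - y) n
      rw [Pi.sub_apply, hTs, hTs, Pi.sub_apply]
  refine ⟨hmaps, hiso, ?_, ?_⟩
  · intro n
    induction n with
    | zero => intro x _ y _; simp
    | succ n ih =>
      intro x hx y hy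
      rw [Function.iterate_succ_apply', Function.iterate_succ_apply']
      rw [hiso _ (hmaps.iterate n hx) _ (hmaps.iterate n hy)]
      exact ih x hx y hy
  · rintro x ⟨hpos, hsum, hle⟩ hfix
    have hconst : ∀ n, x n = x 0 := by
      intro n
      induction n with
      | zero => rfl
      | succ n ih =>
        have := congrFun hfix (n + 1)
        rw [hTs] at this
        rw [← this, ih]
    have hx0 : x 0 = 0 := by
      have : Summable (fun _ : ℕ => x 0) := by
        have := hsum; rwa [show x = fun _ => x 0 from funext hconst] at this
      rwa [summable_const_iff] at this
    have hxzero : x = 0 := funext fun n => by rw [hconst n, hx0]; rfl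
    have := congrFun hfix 0
    rw [hT0, hxzero] at this
    simp at this
end
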